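/- arXiv:2602.01456 — 2 statements merged into one kernel-verified Lean document; each statement's English description precedes it below -/
import Mathlib

section
/- Let p > 0, μ ∈ ℝ, σ > 0, and let Z be a real random variable with the Generalized Gaussian density f_{p,μ,σ}. Set X := max(0, Z). Then E[X] = (1/2) · [ μ · (1 + sgn(μ) · P(1/p, |μ|^p/(p σ^p))) + p^{1/p} σ · Γ(2/p, |μ|^p/(p σ^p)) / Γ(1/p) ], where sgn is the sign function, P(s,t) = γ(s,t)/Γ(s) is the lower regularized gamma function, and Γ(s,t) is the upper incomplete gamma function. -/
open MeasureTheory ProbabilityTheory Real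

/-- The Generalized Gaussian density with ℓ_p parameter `p`, location `μ` and scale `σ`. -/
noncomputable def ggPdf (p μ σ : ℝ) (x : ℝ) : ℝ :=
  p ^ (1 - 1 / p) / (2 * σ * Real.Gamma (1 / p)) * Real.exp (-(|x - μ| ^ p) / (p * σ ^ p))

/-- The lower incomplete gamma function `γ(s,t) = ∫₀^t u^{s−1} e^{−u} du`. -/
noncomputable def lowerIncGamma (s t : ℝ) : ℝ :=
  ∫ u in Set.Ioc (0 : ℝ) t, u ^ (s - 1) * Real.exp (-u)

/-- The lower regularized gamma function `P(s,t) = γ(s,t)/Γ(s)`. -/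
noncomputable def regIncGamma (s t : ℝ) : ℝ := lowerIncGamma s t / Real.Gamma s

/-- The upper incomplete gamma function `Γ(s,t) = ∫_t^∞ u^{s−1} e^{−u} du`. -/
noncomputable def upperIncGamma (s t : ℝ) : ℝ :=
  ∫ u in Set.Ioi t, u ^ (s - 1) * Real.exp (-u)

/-!
After translating by `μ`, `E[max(0, Z)] = ∫_{(-μ, ∞)} (y + μ) g(y) dy` for the centred density
`g = f_{p,0,σ}`, which is even. For `μ < 0` this is an integral over `(|μ|, ∞)`. For `μ ≥ 0`,
pairing `y` with `-y` on `(-μ, μ]` cancels the odd part `y g(y)` and leaves `2μ ∫_{(0, μ]} g`.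
The substitution `u = y^p / (p σ^p)` turns `∫ y^q g(y) dy` over `(0, a]` and over `(a, ∞)` into
`γ` and `Γ(·, ·)` at `((q + 1)/p, a^p/(p σ^p))`, and `γ(s, t) + Γ(s, t) = Γ(s)` produces the
sign-dependent form.
-/

open Set

lemma Real.sign_mul_self_eq_abs (r : ℝ) : Real.sign r * r = |r| := by
  rcases lt_trichotomy r 0 with h | rfl | h
  · rw [Real.sign_of_neg h, abs_of_neg h, neg_one_mul]
  · simp
  · rw [Real.sign_of_pos h, abs_of_pos h, one_mul]

section IncompleteGamma

variable {s : ℝ}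

lemma integrableOn_rpow_mul_exp_neg (hs : 0 < s) {T : Set ℝ} (hT : T ⊆ Ioi 0) :
    IntegrableOn (fun u : ℝ => u ^ (s - 1) * Real.exp (-u)) T := by
  simpa only [mul_comm] using (Real.GammaIntegral_convergent hs).mono_set hT

lemma lowerIncGamma_add_upperIncGamma (hs : 0 < s) {t : ℝ} (ht : 0 ≤ t) :
    lowerIncGamma s t + upperIncGamma s t = Real.Gamma s := by
  rw [Real.Gamma_eq_integral hs, lowerIncGamma, upperIncGamma,
    ← setIntegral_union (Ioc_disjoint_Ioi le_rfl) measurableSet_Ioi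
      (integrableOn_rpow_mul_exp_neg hs fun x hx => hx.1)
      (integrableOn_rpow_mul_exp_neg hs (Ioi_subset_Ioi ht)),
    Ioc_union_Ioi_eq_Ioi ht]
  simp only [mul_comm]

end IncompleteGamma

section ChangeOfVariables

variable {p b q : ℝ}

lemma strictMonoOn_mul_rpow (hp : 0 < p) (hb : 0 < b) :
    StrictMonoOn (fun x : ℝ => b * x ^ p) (Ici 0) := fun _ hx _ _ hxy =>
  mul_lt_mul_of_pos_left (rpow_lt_rpow hx hxy hp) hb

lemma mul_rpow_div_rpow_inv (hp : 0 < p) (hb : 0 < b) {u : ℝ} (hu : 0 ≤ u) :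
    b * ((u / b) ^ p⁻¹) ^ p = u := by
  rw [← rpow_mul (div_nonneg hu hb.le), inv_mul_cancel₀ hp.ne', rpow_one,
    mul_div_cancel₀ _ hb.ne']

lemma image_mul_rpow_Ioi (hp : 0 < p) (hb : 0 < b) {a : ℝ} (ha : 0 ≤ a) :
    (fun x : ℝ => b * x ^ p) '' Ioi a = Ioi (b * a ^ p) := by
  have hmono := strictMonoOn_mul_rpow hp hb
  refine Subset.antisymm (image_subset_iff.2 fun x hx =>
    hmono ha (ha.trans hx.out.le) hx) fun u hu => ?_
  have hu0 : 0 ≤ u := (by positivity : 0 ≤ b * a ^ p).trans hu.out.le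
  have hx : (0 : ℝ) ≤ (u / b) ^ p⁻¹ := rpow_nonneg (div_nonneg hu0 hb.le) _
  refine ⟨_, ?_, mul_rpow_div_rpow_inv hp hb hu0⟩
  rw [mem_Ioi, ← hmono.lt_iff_lt ha hx, mul_rpow_div_rpow_inv hp hb hu0]
  exact hu

lemma image_mul_rpow_Ioc (hp : 0 < p) (hb : 0 < b) {a : ℝ} (ha : 0 ≤ a) :
    (fun x : ℝ => b * x ^ p) '' Ioc 0 a = Ioc 0 (b * a ^ p) := by
  have hmono := strictMonoOn_mul_rpow hp hb
  refine Subset.antisymm (image_subset_iff.2 fun x hx =>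
    ⟨mul_pos hb (rpow_pos_of_pos hx.1 p), hmono.monotoneOn hx.1.le ha hx.2⟩) fun u hu => ?_
  have hx : (0 : ℝ) ≤ (u / b) ^ p⁻¹ := rpow_nonneg (div_nonneg hu.1.le hb.le) _
  refine ⟨_, ⟨?_, ?_⟩, mul_rpow_div_rpow_inv hp hb hu.1.le⟩
  · exact rpow_pos_of_pos (div_pos hu.1 hb) _
  · rw [← hmono.le_iff_le hx ha, mul_rpow_div_rpow_inv hp hb hu.1.le]
    exact hu.2

lemma hasDerivWithinAt_mul_rpow {s : Set ℝ} (hs : s ⊆ Ioi 0) {x : ℝ} (hx : x ∈ s) :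
    HasDerivWithinAt (fun x : ℝ => b * x ^ p) (b * (p * x ^ (p - 1))) s x :=
  ((hasDerivAt_rpow_const (Or.inl (hs hx).ne')).const_mul b).hasDerivWithinAt

lemma abs_deriv_mul_rpow_smul_rpow_mul_exp_neg (hp : 0 < p) (hb : 0 < b) {x : ℝ} (hx : 0 < x) :
    |b * (p * x ^ (p - 1))| • ((b * x ^ p) ^ ((q + 1) / p - 1) * Real.exp (-(b * x ^ p)))
      = p * b ^ ((q + 1) / p) * (x ^ q * Real.exp (-(b * x ^ p))) := by
  have hb_pow : b * b ^ ((q + 1) / p - 1) = b ^ ((q + 1) / p) := by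
    rw [mul_comm, ← rpow_add_one hb.ne', sub_add_cancel]
  have hx_pow : x ^ (p - 1) * (x ^ p) ^ ((q + 1) / p - 1) = x ^ q := by
    rw [← rpow_mul hx.le, ← rpow_add hx]
    congr 1
    field_simp
    ring
  rw [smul_eq_mul, abs_of_pos (by positivity), mul_rpow hb.le (by positivity), ← hb_pow,
    ← hx_pow]
  ring

lemma integral_image_mul_rpow (hp : 0 < p) (hb : 0 < b) {s : Set ℝ} (hms : MeasurableSet s)
    (hs : s ⊆ Ioi 0) :
    ∫ u in (fun x : ℝ => b * x ^ p) '' s, u ^ ((q + 1) / p - 1) * Real.exp (-u)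
      = p * b ^ ((q + 1) / p) * ∫ x in s, x ^ q * Real.exp (-(b * x ^ p)) := by
  rw [integral_image_eq_integral_abs_deriv_smul hms (fun x hx => hasDerivWithinAt_mul_rpow hs hx)
    ((strictMonoOn_mul_rpow hp hb).injOn.mono fun x hx => (hs hx).out.le),
    setIntegral_congr_fun hms fun x hx =>
      abs_deriv_mul_rpow_smul_rpow_mul_exp_neg hp hb (q := q) (hs hx)]
  exact integral_const_mul _ _

lemma integral_Ioi_rpow_mul_exp_neg_mul_rpow (hp : 0 < p) (hb : 0 < b) {a : ℝ} (ha : 0 ≤ a) :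
    ∫ x in Ioi a, x ^ q * Real.exp (-(b * x ^ p))
      = b ^ (-(q + 1) / p) / p * upperIncGamma ((q + 1) / p) (b * a ^ p) := by
  rw [upperIncGamma, ← image_mul_rpow_Ioi hp hb ha,
    integral_image_mul_rpow hp hb measurableSet_Ioi (Ioi_subset_Ioi ha), neg_div,
    rpow_neg hb.le]
  have : b ^ ((q + 1) / p) ≠ 0 := by positivity
  field_simp

lemma integral_Ioc_rpow_mul_exp_neg_mul_rpow (hp : 0 < p) (hb : 0 < b) {a : ℝ} (ha : 0 ≤ a) :
    ∫ x in Ioc 0 a, x ^ q * Real.exp (-(b * x ^ p))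
      = b ^ (-(q + 1) / p) / p * lowerIncGamma ((q + 1) / p) (b * a ^ p) := by
  rw [lowerIncGamma, ← image_mul_rpow_Ioc hp hb ha,
    integral_image_mul_rpow hp hb measurableSet_Ioc fun x hx => hx.1, neg_div,
    rpow_neg hb.le]
  have : b ^ ((q + 1) / p) ≠ 0 := by positivity
  field_simp

end ChangeOfVariables

lemma setIntegral_Ioi_neg_eq {E : Type*} [NormedAddCommGroup E] [NormedSpace ℝ E] {F : ℝ → E}
    {a : ℝ} (ha : 0 ≤ a) (hF : IntegrableOn F (Ioi (-a))) :
    ∫ x in Ioi (-a), F x = (∫ x in Ioc 0 a, F x + F (-x)) + ∫ x in Ioi a, F x := by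
  have hneg : IntervalIntegrable F volume (-a) 0 :=
    (intervalIntegrable_iff_integrableOn_Ioc_of_le (neg_nonpos.2 ha)).2
      (hF.mono_set Ioc_subset_Ioi_self)
  have hpos : IntervalIntegrable F volume 0 a :=
    (intervalIntegrable_iff_integrableOn_Ioc_of_le ha).2
      (hF.mono_set (Ioc_subset_Ioi_self.trans (Ioi_subset_Ioi (neg_nonpos.2 ha))))
  have hrefl : IntervalIntegrable (fun x => F (-x)) volume 0 a := by
    simpa using (IntervalIntegrable.iff_comp_neg).1 hneg.symm
  rw [← Ioc_union_Ioi_eq_Ioi (neg_le_self ha),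
    setIntegral_union (Ioc_disjoint_Ioi le_rfl) measurableSet_Ioi
      (hF.mono_set Ioc_subset_Ioi_self) (hF.mono_set (Ioi_subset_Ioi (neg_le_self ha))),
    ← intervalIntegral.integral_of_le (neg_le_self ha),
    ← intervalIntegral.integral_add_adjacent_intervals hneg hpos,
    ← intervalIntegral.integral_of_le ha]
  congr 1
  rw [intervalIntegral.integral_add hpos hrefl, intervalIntegral.integral_comp_neg, neg_zero,
    add_comm]

lemma integral_comp_eq_integral_mul_of_map_eq_withDensity {Ω : Type*} [MeasurableSpace Ω]
    {P : Measure Ω} {Z : Ω → ℝ} (hZ : Measurable Z) {f : ℝ → ℝ} (hf : Measurable f)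
    (hf_nonneg : ∀ x, 0 ≤ f x)
    (hlaw : P.map Z = volume.withDensity fun x => ENNReal.ofReal (f x))
    {φ : ℝ → ℝ} (hφ : Measurable φ) :
    ∫ ω, φ (Z ω) ∂P = ∫ x, f x * φ x := by
  rw [← integral_map hZ.aemeasurable hφ.aestronglyMeasurable, hlaw,
    integral_withDensity_eq_integral_toReal_smul hf.ennreal_ofReal
      (ae_of_all _ fun _ => ENNReal.ofReal_lt_top)]
  simp only [ENNReal.toReal_ofReal (hf_nonneg _), smul_eq_mul]

section GeneralizedGaussian

variable {p σ : ℝ}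

lemma ggPdf_eq_ggPdf_zero (μ x : ℝ) : ggPdf p μ σ x = ggPdf p 0 σ (x - μ) := by
  simp only [ggPdf, sub_zero]

lemma ggPdf_zero_neg (x : ℝ) : ggPdf p 0 σ (-x) = ggPdf p 0 σ x := by
  simp only [ggPdf, sub_zero, abs_neg]

lemma continuous_ggPdf (hp : 0 < p) (μ : ℝ) : Continuous (ggPdf p μ σ) := by
  have : Continuous fun x => |x - μ| ^ p :=
    (continuous_id.sub continuous_const).abs.rpow_const fun _ => Or.inr hp.le
  unfold ggPdf
  fun_prop

lemma ggPdf_nonneg (hp : 0 < p) (hσ : 0 < σ) (μ x : ℝ) : 0 ≤ ggPdf p μ σ x := by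
  have := Real.Gamma_pos_of_pos (one_div_pos.2 hp)
  unfold ggPdf
  positivity

lemma ggPdf_zero_eq (x : ℝ) :
    ggPdf p 0 σ x = p ^ (1 - 1 / p) / (2 * σ * Real.Gamma (1 / p)) *
      Real.exp (-((p * σ ^ p)⁻¹ * |x| ^ p)) := by
  rw [ggPdf, sub_zero, inv_mul_eq_div, neg_div]

lemma ggPdf_const_mul_rpow_div (hp : 0 < p) (hσ : 0 < σ) (q : ℝ) :
    p ^ (1 - 1 / p) / (2 * σ * Real.Gamma (1 / p)) * ((p * σ ^ p)⁻¹ ^ (-(q + 1) / p) / p)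
      = p ^ (q / p) * σ ^ q / (2 * Real.Gamma (1 / p)) := by
  have hΓ := (Real.Gamma_pos_of_pos (one_div_pos.2 hp)).ne'
  have hp_pow : p ^ (1 - 1 / p) * p ^ ((q + 1) / p) = p * p ^ (q / p) := by
    rw [← rpow_add hp, show 1 - 1 / p + (q + 1) / p = 1 + q / p by ring, rpow_add hp,
      rpow_one]
  have hσ_pow : (σ ^ p) ^ ((q + 1) / p) = σ * σ ^ q := by
    rw [← rpow_mul hσ.le, mul_div_cancel₀ _ hp.ne', rpow_add hσ, rpow_one, mul_comm]
  rw [inv_rpow (by positivity), ← rpow_neg (by positivity), neg_div, neg_neg,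
    mul_rpow hp.le (by positivity), hσ_pow]
  calc _ = p ^ (1 - 1 / p) * p ^ ((q + 1) / p) * (σ * σ ^ q)
          / (2 * σ * Real.Gamma (1 / p) * p) := by ring
    _ = _ := by
      rw [hp_pow]
      field_simp

lemma rpow_mul_ggPdf_zero_of_nonneg (q : ℝ) {x : ℝ} (hx : 0 ≤ x) :
    x ^ q * ggPdf p 0 σ x = p ^ (1 - 1 / p) / (2 * σ * Real.Gamma (1 / p)) *
      (x ^ q * Real.exp (-((p * σ ^ p)⁻¹ * x ^ p))) := by
  rw [ggPdf_zero_eq, abs_of_nonneg hx]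
  ring

lemma integrableOn_Ioi_rpow_mul_ggPdf_zero (hp : 0 < p) (hσ : 0 < σ) {q : ℝ} (hq : -1 < q)
    {a : ℝ} (ha : 0 ≤ a) : IntegrableOn (fun x => x ^ q * ggPdf p 0 σ x) (Ioi a) := by
  refine IntegrableOn.congr_fun (((integrableOn_rpow_mul_exp_neg_mul_rpow hq hp
      (by positivity : 0 < (p * σ ^ p)⁻¹)).mono_set (Ioi_subset_Ioi ha)).const_mul
      (p ^ (1 - 1 / p) / (2 * σ * Real.Gamma (1 / p)))) (fun x hx => ?_) measurableSet_Ioi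
  rw [rpow_mul_ggPdf_zero_of_nonneg q (ha.trans hx.out.le), neg_mul]

lemma integral_Ioi_rpow_mul_ggPdf_zero (hp : 0 < p) (hσ : 0 < σ) (q : ℝ) {a : ℝ}
    (ha : 0 ≤ a) :
    ∫ x in Ioi a, x ^ q * ggPdf p 0 σ x
      = p ^ (q / p) * σ ^ q / (2 * Real.Gamma (1 / p))
        * upperIncGamma ((q + 1) / p) (a ^ p / (p * σ ^ p)) := by
  rw [setIntegral_congr_fun measurableSet_Ioi fun x hx =>
      rpow_mul_ggPdf_zero_of_nonneg q (ha.trans hx.out.le),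
    integral_const_mul, integral_Ioi_rpow_mul_exp_neg_mul_rpow hp (by positivity) ha,
    ← mul_assoc, ggPdf_const_mul_rpow_div hp hσ, inv_mul_eq_div]

lemma integral_Ioc_rpow_mul_ggPdf_zero (hp : 0 < p) (hσ : 0 < σ) (q : ℝ) {a : ℝ}
    (ha : 0 ≤ a) :
    ∫ x in Ioc 0 a, x ^ q * ggPdf p 0 σ x
      = p ^ (q / p) * σ ^ q / (2 * Real.Gamma (1 / p))
        * lowerIncGamma ((q + 1) / p) (a ^ p / (p * σ ^ p)) := by
  rw [setIntegral_congr_fun measurableSet_Ioc fun x hx =>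
      rpow_mul_ggPdf_zero_of_nonneg q hx.1.le,
    integral_const_mul, integral_Ioc_rpow_mul_exp_neg_mul_rpow hp (by positivity) ha,
    ← mul_assoc, ggPdf_const_mul_rpow_div hp hσ, inv_mul_eq_div]

lemma integral_Ioi_mul_ggPdf_zero (hp : 0 < p) (hσ : 0 < σ) {a : ℝ} (ha : 0 ≤ a) :
    ∫ x in Ioi a, x * ggPdf p 0 σ x
      = p ^ (1 / p) * σ / (2 * Real.Gamma (1 / p))
        * upperIncGamma (2 / p) (a ^ p / (p * σ ^ p)) := by
  simpa [one_add_one_eq_two] using integral_Ioi_rpow_mul_ggPdf_zero hp hσ 1 ha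

lemma integral_Ioi_ggPdf_zero (hp : 0 < p) (hσ : 0 < σ) {a : ℝ} (ha : 0 ≤ a) :
    ∫ x in Ioi a, ggPdf p 0 σ x
      = upperIncGamma (1 / p) (a ^ p / (p * σ ^ p)) / (2 * Real.Gamma (1 / p)) := by
  simpa [div_eq_inv_mul] using integral_Ioi_rpow_mul_ggPdf_zero hp hσ 0 ha

lemma integral_Ioc_ggPdf_zero (hp : 0 < p) (hσ : 0 < σ) {a : ℝ} (ha : 0 ≤ a) :
    ∫ x in Ioc 0 a, ggPdf p 0 σ x
      = lowerIncGamma (1 / p) (a ^ p / (p * σ ^ p)) / (2 * Real.Gamma (1 / p)) := by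
  simpa [div_eq_inv_mul] using integral_Ioc_rpow_mul_ggPdf_zero hp hσ 0 ha

lemma integral_mul_max_zero_ggPdf (μ : ℝ) :
    ∫ x, ggPdf p μ σ x * max 0 x = ∫ y in Ioi (-μ), (y + μ) * ggPdf p 0 σ y := by
  rw [← integral_add_right_eq_self _ μ, ← integral_indicator measurableSet_Ioi]
  congr 1 with y
  rw [ggPdf_eq_ggPdf_zero, add_sub_cancel_right]
  by_cases hy : y ∈ Ioi (-μ)
  · rw [indicator_of_mem hy, max_eq_right (by linarith [hy.out]), mul_comm]
  · have hy' : y + μ ≤ 0 := by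
      rw [mem_Ioi, not_lt] at hy
      linarith
    rw [indicator_of_notMem hy, max_eq_left hy', mul_zero]

lemma integrableOn_Ioi_mul_ggPdf_zero (hp : 0 < p) (hσ : 0 < σ) {a : ℝ} (ha : 0 ≤ a) :
    IntegrableOn (fun x => x * ggPdf p 0 σ x) (Ioi a) := by
  simpa using integrableOn_Ioi_rpow_mul_ggPdf_zero hp hσ (q := 1) (by norm_num) ha

lemma integrableOn_Ioi_ggPdf_zero (hp : 0 < p) (hσ : 0 < σ) {a : ℝ} (ha : 0 ≤ a) :
    IntegrableOn (ggPdf p 0 σ) (Ioi a) := by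
  simpa using integrableOn_Ioi_rpow_mul_ggPdf_zero hp hσ (q := 0) (by norm_num) ha

lemma integrableOn_Ioi_add_mul_ggPdf_zero (hp : 0 < p) (hσ : 0 < σ) (μ a : ℝ) :
    IntegrableOn (fun y => (y + μ) * ggPdf p 0 σ y) (Ioi a) := by
  have hpos : IntegrableOn (fun y => (y + μ) * ggPdf p 0 σ y) (Ioi 0) := by
    simpa only [add_mul, Pi.add_def] using (integrableOn_Ioi_mul_ggPdf_zero hp hσ le_rfl).add
      ((integrableOn_Ioi_ggPdf_zero hp hσ le_rfl).const_mul μ)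
  have hcont : Continuous fun y => (y + μ) * ggPdf p 0 σ y := by
    have := continuous_ggPdf (σ := σ) hp 0
    fun_prop
  have h := (hcont.integrableOn_Ioc (a := min a 0) (b := 0)).union hpos
  rw [Ioc_union_Ioi_eq_Ioi (min_le_right a 0)] at h
  exact h.mono_set (Ioi_subset_Ioi (min_le_left a 0))

lemma integral_Ioi_add_mul_ggPdf_zero (hp : 0 < p) (hσ : 0 < σ) (μ : ℝ) {a : ℝ} (ha : 0 ≤ a) :
    ∫ y in Ioi a, (y + μ) * ggPdf p 0 σ y
      = p ^ (1 / p) * σ / (2 * Real.Gamma (1 / p)) * upperIncGamma (2 / p) (a ^ p / (p * σ ^ p))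
        + μ * (upperIncGamma (1 / p) (a ^ p / (p * σ ^ p)) / (2 * Real.Gamma (1 / p))) := by
  simp only [add_mul]
  rw [integral_add (integrableOn_Ioi_mul_ggPdf_zero hp hσ ha)
      ((integrableOn_Ioi_ggPdf_zero hp hσ ha).const_mul μ), integral_const_mul,
    integral_Ioi_mul_ggPdf_zero hp hσ ha, integral_Ioi_ggPdf_zero hp hσ ha]

lemma integral_Ioi_neg_add_mul_ggPdf_zero (hp : 0 < p) (hσ : 0 < σ) (μ : ℝ) :
    ∫ y in Ioi (-μ), (y + μ) * ggPdf p 0 σ y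
      = (1 / 2) * (μ * (1 + Real.sign μ * regIncGamma (1 / p) (|μ| ^ p / (p * σ ^ p)))
        + p ^ (1 / p) * σ * upperIncGamma (2 / p) (|μ| ^ p / (p * σ ^ p))
          / Real.Gamma (1 / p)) := by
  have hΓ := (Real.Gamma_pos_of_pos (one_div_pos.2 hp)).ne'
  have hsplit := lowerIncGamma_add_upperIncGamma (one_div_pos.2 hp)
    (by positivity : 0 ≤ |μ| ^ p / (p * σ ^ p))
  rw [mul_add μ, mul_one, ← mul_assoc, mul_comm μ, Real.sign_mul_self_eq_abs, regIncGamma]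
  rcases lt_or_ge μ 0 with hμ | hμ
  · rw [← abs_of_neg hμ, integral_Ioi_add_mul_ggPdf_zero hp hσ μ (abs_nonneg μ)]
    generalize |μ| ^ p / (p * σ ^ p) = T at hsplit ⊢
    rw [abs_of_neg hμ]
    field_simp
    linear_combination μ * hsplit
  · have hsymm : ∫ x in Ioc 0 μ, (x + μ) * ggPdf p 0 σ x + (-x + μ) * ggPdf p 0 σ (-x)
        = 2 * μ * ∫ x in Ioc 0 μ, ggPdf p 0 σ x := by
      rw [← integral_const_mul]
      congr 1 with x
      rw [ggPdf_zero_neg]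
      ring
    rw [setIntegral_Ioi_neg_eq hμ (integrableOn_Ioi_add_mul_ggPdf_zero hp hσ μ _), hsymm,
      integral_Ioc_ggPdf_zero hp hσ hμ, integral_Ioi_add_mul_ggPdf_zero hp hσ μ hμ,
      abs_of_nonneg hμ]
    rw [abs_of_nonneg hμ] at hsplit
    field_simp
    linear_combination μ * hsplit

end GeneralizedGaussian

theorem rectified_genGaussian_mean_general
    (p μ σ : ℝ) (hp : 0 < p) (hσ : 0 < σ)
    {Ω : Type*} [MeasureSpace Ω]
    (Z : Ω → ℝ) (hmeas : Measurable Z)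
    (hlaw : Measure.map Z ℙ =
      volume.withDensity (fun x => ENNReal.ofReal (ggPdf p μ σ x))) :
    (∫ ω, max 0 (Z ω) ∂ℙ) =
      (1 / 2) * (μ * (1 + Real.sign μ * regIncGamma (1 / p) (|μ| ^ p / (p * σ ^ p)))
        + p ^ (1 / p) * σ * upperIncGamma (2 / p) (|μ| ^ p / (p * σ ^ p))
          / Real.Gamma (1 / p)) := by
  rw [integral_comp_eq_integral_mul_of_map_eq_withDensity hmeas
      (continuous_ggPdf hp μ).measurable (ggPdf_nonneg hp hσ μ) hlaw
      (φ := fun x => max 0 x) (by fun_prop),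
    integral_mul_max_zero_ggPdf, integral_Ioi_neg_add_mul_ggPdf_zero hp hσ μ]

/-- **Mean of the Rectified Generalized Gaussian.**
If `Z` has Generalized Gaussian density `f_{p,μ,σ}` and `X = max(0,Z)`, then
`E[X] = (1/2)[μ(1 + sgn(μ)P(1/p, |μ|^p/(pσ^p))) + p^{1/p}σ Γ(2/p, |μ|^p/(pσ^p))/Γ(1/p)]`. -/
theorem rectified_genGaussian_mean
    (p μ σ : ℝ) (hp : 0 < p) (hσ : 0 < σ)
    {Ω : Type*} [MeasureSpace Ω] [IsProbabilityMeasure (ℙ : Measure Ω)]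
    (Z : Ω → ℝ) (hmeas : Measurable Z)
    (hlaw : Measure.map Z ℙ =
      volume.withDensity (fun x => ENNReal.ofReal (ggPdf p μ σ x))) :
    (∫ ω, max 0 (Z ω) ∂ℙ) =
      (1 / 2) * (μ * (1 + Real.sign μ * regIncGamma (1 / p) (|μ| ^ p / (p * σ ^ p)))
        + p ^ (1 / p) * σ * upperIncGamma (2 / p) (|μ| ^ p / (p * σ ^ p))
          / Real.Gamma (1 / p)) :=
  rectified_genGaussian_mean_general p μ σ hp hσ Z hmeas hlaw
end

section
/- Let p > 0, μ ∈ ℝ, σ > 0, and let ℙ_X be the Rectified Generalized Gaussian probability measure ℙ_X = Φ_p(−μ/σ) · δ₀ + (1 − Φ_p(−μ/σ)) · ℙ_{TGN}, where δ₀ is the Dirac measure at 0, Φ_p is the CDF of the standard Generalized Gaussian density f_{p,0,1}, and ℙ_{TGN} is the Generalized Gaussian law with density f_{p,μ,σ} conditioned on (0,∞). Then for every Borel set A ⊆ ℝ, ℙ_X(A) = ∫_A f dν, where ν := λ + δ₀ (λ Lebesgue measure), and f(x) = Φ_p(−μ/σ) · 1_{{0}}(x) + (p^{1−1/p}/(2σΓ(1/p)))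 · exp(−|x−μ|^p/(p σ^p)) · 1_{(0,∞)}(x). In particular, f is the Radon–Nikodym derivative of ℙ_X with respect to ν. -/
/-!
With `c = Φ_p(−μ/σ)`, the substitution `y = (x − μ)/σ` shows that `f_{p,μ,σ}` gives `(0, ∞)`
the mass `1 − c`, an upper tail of the standard density and hence positive. So the weight `1 − c`
cancels the normalisation of `ℙ_{TGN}`, and `ℙ_X = c δ₀ + 1_{(0,∞)} f_{p,μ,σ} λ`. This is
also `f (λ + δ₀) = f(0) δ₀ + f λ`, because `f(0) = c` and `f = 1_{(0,∞)} f_{p,μ,σ}` off the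
null set `{0}`.
-/

open MeasureTheory Real

/-- The CDF of the standard Generalized Gaussian distribution `f_{p,0,1}`. -/
noncomputable def ggCdf (p : ℝ) (x : ℝ) : ℝ := ∫ t in Set.Iic x, ggPdf p 0 1 t

/-- The Generalized Gaussian law `ℙ_{GN}`, with density `f_{p,μ,σ}` w.r.t. Lebesgue. -/
noncomputable def ggMeasure (p μ σ : ℝ) : Measure ℝ :=
  volume.withDensity (fun x => ENNReal.ofReal (ggPdf p μ σ x))

/-- The Truncated Generalized Gaussian law: `ℙ_{GN}` conditioned on `(0,∞)`. -/
noncomputable def tgnMeasure (p μ σ : ℝ) : Measure ℝ :=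
  (ggMeasure p μ σ (Set.Ioi 0))⁻¹ • (ggMeasure p μ σ).restrict (Set.Ioi 0)

/-- The Rectified Generalized Gaussian probability measure, as the mixture
`ℙ_X = Φ_p(−μ/σ) · δ₀ + (1 − Φ_p(−μ/σ)) · ℙ_{TGN}`. -/
noncomputable def rgnMeasure (p μ σ : ℝ) : Measure ℝ :=
  ENNReal.ofReal (ggCdf p (-(μ / σ))) • Measure.dirac 0
    + ENNReal.ofReal (1 - ggCdf p (-(μ / σ))) • tgnMeasure p μ σ

/-- The Radon–Nikodym derivative of the Rectified Generalized Gaussian with respect to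
the mixed measure `ν = λ + δ₀`:
`f(x) = Φ_p(−μ/σ)·1_{{0}}(x) + f_{p,μ,σ}(x)·1_{(0,∞)}(x)`. -/
noncomputable def rgnPdf (p μ σ : ℝ) (x : ℝ) : ℝ :=
  ggCdf p (-(μ / σ)) * Set.indicator {0} (fun _ => (1 : ℝ)) x
    + ggPdf p μ σ x * Set.indicator (Set.Ioi 0) (fun _ => (1 : ℝ)) x


open Set

lemma integral_Ioi_comp_sub_div {E : Type*} [NormedAddCommGroup E] [NormedSpace ℝ E]
    (g : ℝ → E) (a μ : ℝ) {σ : ℝ} (hσ : 0 < σ) :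
    ∫ x in Ioi a, g ((x - μ) / σ) = σ • ∫ y in Ioi ((a - μ) / σ), g y := by
  have hind : ∀ x, (Ioi a).indicator (fun x => g ((x - μ) / σ)) x
      = (Ioi ((a - μ) / σ)).indicator g ((x - μ) / σ) := by
    intro x
    have hmem : (x - μ) / σ ∈ Ioi ((a - μ) / σ) ↔ x ∈ Ioi a := by
      rw [mem_Ioi, mem_Ioi, div_lt_div_iff_of_pos_right hσ, sub_lt_sub_iff_right]
    by_cases hx : x ∈ Ioi a
    · rw [indicator_of_mem hx, indicator_of_mem (hmem.mpr hx)]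
    · rw [indicator_of_notMem hx, indicator_of_notMem (mt hmem.mp hx)]
  rw [← integral_indicator measurableSet_Ioi, ← integral_indicator measurableSet_Ioi]
  simp_rw [hind]
  rw [integral_sub_right_eq_self (fun y => (Ioi ((a - μ) / σ)).indicator g (y / σ)) μ,
    Measure.integral_comp_div, abs_of_pos hσ]

lemma integral_exp_neg_mul_abs_rpow {p b : ℝ} (hp : 0 < p) (hb : 0 < b) :
    ∫ x, exp (-b * |x| ^ p) = 2 * (b ^ (-1 / p) * Gamma (1 / p + 1)) := by
  rw [integral_comp_abs (f := fun x => exp (-b * x ^ p)), integral_exp_neg_mul_rpow hp hb]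

section GeneralizedGaussian

variable {p μ σ : ℝ}

lemma ggPdf_pos (hp : 0 < p) (hσ : 0 < σ) (x : ℝ) : 0 < ggPdf p μ σ x := by
  have := Gamma_pos_of_pos (one_div_pos.mpr hp)
  unfold ggPdf
  positivity

lemma ggPdf_zero_one (t : ℝ) :
    ggPdf p 0 1 t = p ^ (1 - 1 / p) / (2 * Gamma (1 / p)) * exp (-p⁻¹ * |t| ^ p) := by
  simp only [ggPdf, sub_zero, one_rpow, mul_one]
  ring_nf

lemma ggPdf_eq_inv_mul_ggPdf_zero_one (hσ : 0 < σ) (x : ℝ) :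
    ggPdf p μ σ x = σ⁻¹ * ggPdf p 0 1 ((x - μ) / σ) := by
  simp only [ggPdf, sub_zero, one_rpow, mul_one, abs_div, abs_of_pos hσ,
    div_rpow (abs_nonneg _) hσ.le]
  ring_nf

lemma integral_ggPdf_zero_one (hp : 0 < p) : ∫ t, ggPdf p 0 1 t = 1 := by
  have hΓ : Gamma (1 / p) ≠ 0 := (Gamma_pos_of_pos (one_div_pos.mpr hp)).ne'
  have hpow : p ^ (1 - 1 / p) * p ^ (1 / p) * p⁻¹ = 1 := by
    rw [← rpow_add hp, sub_add_cancel, rpow_one, mul_inv_cancel₀ hp.ne']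
  simp_rw [ggPdf_zero_one, integral_const_mul]
  rw [integral_exp_neg_mul_abs_rpow hp (inv_pos.mpr hp), Gamma_add_one (one_div_ne_zero hp.ne'),
    inv_rpow hp.le, ← rpow_neg hp.le, neg_div, neg_neg]
  rw [div_mul_eq_mul_div, div_eq_one_iff_eq (mul_ne_zero two_ne_zero hΓ)]
  linear_combination (2 * Gamma (1 / p)) * hpow

lemma integrable_ggPdf_zero_one (hp : 0 < p) : Integrable (ggPdf p 0 1) :=
  .of_integral_ne_zero (by rw [integral_ggPdf_zero_one hp]; exact one_ne_zero)

lemma integrable_ggPdf (hp : 0 < p) (hσ : 0 < σ) : Integrable (ggPdf p μ σ) := by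
  have h : Integrable fun y => ggPdf p 0 1 (y / σ) := by
    simpa only [div_eq_mul_inv] using
      (integrable_ggPdf_zero_one hp).comp_mul_right' (inv_ne_zero hσ.ne')
  simpa only [← ggPdf_eq_inv_mul_ggPdf_zero_one hσ] using (h.comp_sub_right μ).const_mul σ⁻¹

lemma one_sub_ggCdf (hp : 0 < p) (c : ℝ) : 1 - ggCdf p c = ∫ y in Ioi c, ggPdf p 0 1 y := by
  have hi := integrable_ggPdf_zero_one hp
  have h := intervalIntegral.integral_Iic_add_Ioi (b := c) hi.integrableOn hi.integrableOn
  rw [integral_ggPdf_zero_one hp] at h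
  rw [ggCdf]
  linarith

lemma ggCdf_lt_one (hp : 0 < p) (c : ℝ) : ggCdf p c < 1 := by
  have hsupp : Function.support (ggPdf p 0 1) = univ :=
    Function.support_eq_univ fun x => (ggPdf_pos hp one_pos x).ne'
  have htail : 0 < ∫ y in Ioi c, ggPdf p 0 1 y := by
    rw [setIntegral_pos_iff_support_of_nonneg_ae
      (ae_of_all _ fun x => (ggPdf_pos hp one_pos x).le)
      (integrable_ggPdf_zero_one hp).integrableOn,
      hsupp, univ_inter, Real.volume_Ioi]
    exact ENNReal.zero_lt_top
  linarith [one_sub_ggCdf hp c]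

lemma setIntegral_ggPdf_Ioi_zero (hp : 0 < p) (hσ : 0 < σ) :
    ∫ x in Ioi 0, ggPdf p μ σ x = 1 - ggCdf p (-(μ / σ)) := by
  simp_rw [ggPdf_eq_inv_mul_ggPdf_zero_one hσ, integral_const_mul,
    integral_Ioi_comp_sub_div _ _ _ hσ, zero_sub, neg_div, smul_eq_mul, one_sub_ggCdf hp]
  field_simp

lemma ggMeasure_Ioi_zero (hp : 0 < p) (hσ : 0 < σ) :
    ggMeasure p μ σ (Ioi 0) = ENNReal.ofReal (1 - ggCdf p (-(μ / σ))) := by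
  rw [ggMeasure, withDensity_apply _ measurableSet_Ioi,
    ← ofReal_integral_eq_lintegral_ofReal (integrable_ggPdf hp hσ).integrableOn
      (ae_of_all _ fun x => (ggPdf_pos hp hσ x).le),
    setIntegral_ggPdf_Ioi_zero hp hσ]

end GeneralizedGaussian

section RectifiedGeneralizedGaussian

variable {p μ σ : ℝ}

lemma rgnPdf_zero : rgnPdf p μ σ 0 = ggCdf p (-(μ / σ)) := by
  simp [rgnPdf]

lemma rgnPdf_of_ne_zero {x : ℝ} (hx : x ≠ 0) :
    rgnPdf p μ σ x = (Ioi 0).indicator (ggPdf p μ σ) x := by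
  by_cases hpos : x ∈ Ioi 0 <;> simp [rgnPdf, hx, hpos]

lemma rgnMeasure_eq_add_restrict (hp : 0 < p) (hσ : 0 < σ) :
    rgnMeasure p μ σ = ENNReal.ofReal (ggCdf p (-(μ / σ))) • Measure.dirac 0
      + (ggMeasure p μ σ).restrict (Ioi 0) := by
  have hmass : ENNReal.ofReal (1 - ggCdf p (-(μ / σ))) ≠ 0 := by
    rw [ne_eq, ENNReal.ofReal_eq_zero, not_le, sub_pos]
    exact ggCdf_lt_one hp _
  rw [rgnMeasure, tgnMeasure, smul_smul, ggMeasure_Ioi_zero hp hσ,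
    ENNReal.mul_inv_cancel hmass ENNReal.ofReal_ne_top, one_smul]

lemma withDensity_rgnPdf :
    (volume + Measure.dirac (0 : ℝ)).withDensity (fun x => ENNReal.ofReal (rgnPdf p μ σ x))
      = ENNReal.ofReal (ggCdf p (-(μ / σ))) • Measure.dirac 0
        + (ggMeasure p μ σ).restrict (Ioi 0) := by
  rw [withDensity_add_measure, add_comm, dirac_withDensity, rgnPdf_zero, ggMeasure,
    restrict_withDensity measurableSet_Ioi, ← withDensity_indicator measurableSet_Ioi]
  congr 1
  refine withDensity_congr_ae ?_
  filter_upwards [volume.ae_ne 0] with x hx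
  rw [rgnPdf_of_ne_zero hx, indicator_apply, indicator_apply, apply_ite ENNReal.ofReal,
    ENNReal.ofReal_zero]

end RectifiedGeneralizedGaussian

theorem rgnMeasure_eq_setLIntegral_rgnPdf_general (p μ σ : ℝ) (hp : 0 < p) (hσ : 0 < σ)
    (A : Set ℝ) :
    rgnMeasure p μ σ A =
      ∫⁻ x in A, ENNReal.ofReal (rgnPdf p μ σ x) ∂(volume + Measure.dirac 0) := by
  rw [← withDensity_apply', withDensity_rgnPdf, rgnMeasure_eq_add_restrict hp hσ]

/-- **Radon–Nikodym derivative of the Rectified Generalized Gaussian.**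
For every Borel set `A ⊆ ℝ`, `ℙ_X(A) = ∫_A f dν` where `ν = λ + δ₀` and
`f(x) = Φ_p(−μ/σ)·1_{{0}}(x) + (p^{1−1/p}/(2σΓ(1/p))) e^{−|x−μ|^p/(pσ^p)}·1_{(0,∞)}(x)`. -/
theorem rgnMeasure_eq_setLIntegral_rgnPdf (p μ σ : ℝ) (hp : 0 < p) (hσ : 0 < σ)
    (A : Set ℝ) (hA : MeasurableSet A) :
    rgnMeasure p μ σ A =
      ∫⁻ x in A, ENNReal.ofReal (rgnPdf p μ σ x) ∂(volume + Measure.dirac 0) :=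
  rgnMeasure_eq_setLIntegral_rgnPdf_general p μ σ hp hσ A
end
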